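/- arXiv:2511.04135 — 5 statements merged into one kernel-verified Lean document; each statement's English description precedes it below -/
import Mathlib

section
/- Hensel lifting of coprime factorizations: let R = ℤ/p^a, let f be a monic polynomial over R, and suppose the reduction of f mod p factors as a product of two coprime monic polynomials g₁·g₂ over 𝔽_p. Then there exist monic polynomials f₁, f₂ over R such that f = f₁·f₂, the reduction of fᵢ mod p equals gᵢ for i = 1,2. -/
open Polynomial

lemma zmod_castHom_surjective {n m : ℕ} [NeZero m] (h : m ∣ n) :
    Function.Surjective (ZMod.castHom h (ZMod m)) := by
  intro y
  obtain ⟨k, rfl⟩ := ZMod.natCast_zmod_surjective (n := m) y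
  exact ⟨(k : ZMod n), by simp⟩

lemma zmod_dvd_of_cast_eq_zero {n m : ℕ} [NeZero n] (h : m ∣ n) (x : ZMod n)
    (hx : ZMod.castHom h (ZMod m) x = 0) : ∃ y : ZMod n, x = (m : ZMod n) * y := by
  obtain ⟨k, rfl⟩ := ZMod.natCast_zmod_surjective (n := n) x
  rw [map_natCast] at hx
  rw [ZMod.natCast_eq_zero_iff] at hx
  obtain ⟨t, rfl⟩ := hx
  exact ⟨(t : ZMod n), by push_cast; ring⟩

lemma poly_pa_mul_eq_zero (p a : ℕ) [NeZero (p ^ (a + 1))] (h : p ∣ p ^ (a + 1))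
    (Q : Polynomial (ZMod (p ^ (a + 1))))
    (hQ : Q.map (ZMod.castHom h (ZMod p)) = 0) :
    Polynomial.C ((p ^ a : ℕ) : ZMod (p ^ (a + 1))) * Q = 0 := by
  ext n
  rw [coeff_C_mul, coeff_zero]
  have h1 : (Q.map (ZMod.castHom h (ZMod p))).coeff n = 0 := by rw [hQ, coeff_zero]
  rw [coeff_map] at h1
  obtain ⟨y, hy⟩ := zmod_dvd_of_cast_eq_zero h _ h1
  rw [hy, ← mul_assoc]
  have h2 : ((p ^ a : ℕ) : ZMod (p ^ (a + 1))) * ((p : ℕ) : ZMod (p ^ (a + 1)))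
      = ((p ^ (a + 1) : ℕ) : ZMod (p ^ (a + 1))) := by push_cast; ring
  rw [h2, ZMod.natCast_self, zero_mul]

lemma exists_factor_pa (p a : ℕ) [NeZero (p ^ (a + 1))]
    (D : Polynomial (ZMod (p ^ (a + 1))))
    (hD : D.map (ZMod.castHom (pow_dvd_pow p (Nat.le_succ a)) (ZMod (p ^ a))) = 0) :
    ∃ E, D = Polynomial.C ((p ^ a : ℕ) : ZMod (p ^ (a + 1))) * E ∧ E.degree ≤ D.degree := by
  have hx : ∀ n, ZMod.castHom (pow_dvd_pow p (Nat.le_succ a)) (ZMod (p ^ a)) (D.coeff n) = 0 := by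
    intro n
    have : (D.map (ZMod.castHom (pow_dvd_pow p (Nat.le_succ a)) (ZMod (p ^ a)))).coeff n = 0 := by
      rw [hD, coeff_zero]
    rwa [coeff_map] at this
  choose c hc using fun n => zmod_dvd_of_cast_eq_zero (pow_dvd_pow p (Nat.le_succ a)) (D.coeff n) (hx n)
  refine ⟨∑ n ∈ D.support, Polynomial.C (c n) * X ^ n, ?_, ?_⟩
  · conv_lhs => rw [D.as_sum_support_C_mul_X_pow]
    rw [Finset.mul_sum]
    refine Finset.sum_congr rfl fun n _ => ?_
    rw [← mul_assoc, ← C_mul, ← hc n]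
  · refine le_trans (degree_sum_le _ _) ?_
    refine Finset.sup_le fun n hn => ?_
    exact le_trans (degree_C_mul_X_pow_le _ _) (le_degree_of_mem_supp n hn)

lemma hensel_aux (p : ℕ) (hp : p.Prime) : ∀ a : ℕ, 1 ≤ a →
    ∀ f : Polynomial (ZMod (p ^ a)), f.Monic →
    ∀ g₁ g₂ : Polynomial (ZMod p), g₁.Monic → g₂.Monic → IsCoprime g₁ g₂ →
    ∀ (hdvd : p ∣ p ^ a), f.map (ZMod.castHom hdvd (ZMod p)) = g₁ * g₂ →
    ∃ f₁ f₂ : Polynomial (ZMod (p ^ a)), f₁.Monic ∧ f₂.Monic ∧ f = f₁ * f₂ ∧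
      f₁.map (ZMod.castHom hdvd (ZMod p)) = g₁ ∧
      f₂.map (ZMod.castHom hdvd (ZMod p)) = g₂ := by
  haveI : Fact p.Prime := ⟨hp⟩
  intro a
  induction a with
  | zero => omega
  | succ a ih =>
    intro _ f hf g₁ g₂ hg₁ hg₂ hcop hdvd hfac
    rcases Nat.eq_zero_or_pos a with rfl | ha
    · -- base case: p ^ 1 = p
      set e : ZMod (p ^ 1) ≃+* ZMod p := ZMod.ringEquivCongr (pow_one p) with he_def
      have he : ZMod.castHom hdvd (ZMod p) = (e : ZMod (p ^ 1) →+* ZMod p) :=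
        RingHom.ext_zmod _ _
      have hcomp1 : (e : ZMod (p ^ 1) →+* ZMod p).comp (e.symm : ZMod p →+* ZMod (p ^ 1))
          = RingHom.id (ZMod p) := RingHom.ext_zmod _ _
      have hcomp2 : (e.symm : ZMod p →+* ZMod (p ^ 1)).comp (e : ZMod (p ^ 1) →+* ZMod p)
          = RingHom.id (ZMod (p ^ 1)) := RingHom.ext_zmod _ _
      refine ⟨g₁.map (e.symm : ZMod p →+* ZMod (p ^ 1)),
        g₂.map (e.symm : ZMod p →+* ZMod (p ^ 1)), hg₁.map _, hg₂.map _, ?_, ?_, ?_⟩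
      · have h1 : f.map (e : ZMod (p ^ 1) →+* ZMod p) = g₁ * g₂ := by rw [← he]; exact hfac
        have : f = (f.map (e : ZMod (p ^ 1) →+* ZMod p)).map (e.symm : ZMod p →+* ZMod (p ^ 1)) := by
          rw [map_map, hcomp2, map_id]
        rw [this, h1, Polynomial.map_mul]
      · rw [he, map_map, hcomp1, map_id]
      · rw [he, map_map, hcomp1, map_id]
    · -- inductive step
      haveI : NeZero (p ^ (a + 1)) := ⟨pow_ne_zero _ hp.ne_zero⟩
      haveI : NeZero (p ^ a) := ⟨pow_ne_zero _ hp.ne_zero⟩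
      haveI : Fact (1 < p ^ (a + 1)) := ⟨Nat.one_lt_pow (Nat.succ_ne_zero a) hp.one_lt⟩
      haveI : Fact (1 < p ^ a) := ⟨Nat.one_lt_pow (by omega) hp.one_lt⟩
      set ρ : ZMod (p ^ (a + 1)) →+* ZMod (p ^ a) :=
        ZMod.castHom (pow_dvd_pow p (Nat.le_succ a)) _ with hρ_def
      set π : ZMod (p ^ (a + 1)) →+* ZMod p := ZMod.castHom hdvd _ with hπ_def
      have hadvd : p ∣ p ^ a := dvd_pow_self p (by omega)
      set π' : ZMod (p ^ a) →+* ZMod p := ZMod.castHom hadvd _ with hπ'_def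
      have hππ : π'.comp ρ = π := RingHom.ext_zmod _ _
      obtain ⟨f₁, f₂, hf₁, hf₂, hmul, hm₁, hm₂⟩ :=
        ih ha (f.map ρ) (hf.map ρ) g₁ g₂ hg₁ hg₂ hcop hadvd
          (by rw [map_map, hππ]; exact hfac)
      obtain ⟨F₁, hF₁map, hF₁deg, hF₁⟩ := lifts_and_degree_eq_and_monic
        ((mem_lifts _).mpr (Polynomial.map_surjective ρ (zmod_castHom_surjective _) f₁)) hf₁
      obtain ⟨F₂, hF₂map, hF₂deg, hF₂⟩ := lifts_and_degree_eq_and_monic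
        ((mem_lifts _).mpr (Polynomial.map_surjective ρ (zmod_castHom_surjective _) f₂)) hf₂
      -- maps of F₁ F₂ mod p
      have hF₁π : F₁.map π = g₁ := by rw [← hππ, ← map_map, hF₁map, hm₁]
      have hF₂π : F₂.map π = g₂ := by rw [← hππ, ← map_map, hF₂map, hm₂]
      -- the defect D
      have hDmap : (f - F₁ * F₂).map ρ = 0 := by
        rw [Polynomial.map_sub, Polynomial.map_mul, hF₁map, hF₂map, ← hmul, sub_self]
      obtain ⟨E, hE, hEdeg⟩ := exists_factor_pa p a (f - F₁ * F₂) hDmap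
      -- degree facts
      have hfdeg : f.degree = g₁.degree + g₂.degree := by
        rw [← hf.degree_map π, hfac, degree_mul]
      have hF₁degg : F₁.degree = g₁.degree := by rw [← hF₁π, hF₁.degree_map]
      have hF₂degg : F₂.degree = g₂.degree := by rw [← hF₂π, hF₂.degree_map]
      have hDlt : (f - F₁ * F₂).degree < f.degree := by
        refine degree_sub_lt ?_ hf.ne_zero ?_
        · rw [hF₂.degree_mul, hF₁degg, hF₂degg, hfdeg]
        · rw [hf.leadingCoeff, (hF₁.mul hF₂).leadingCoeff]
      -- correction terms over ZMod p
      obtain ⟨u, v, huv⟩ := hcop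
      set Eb : Polynomial (ZMod p) := E.map π with hEb_def
      set h₁ : Polynomial (ZMod p) := (Eb * v) %ₘ g₁ with hh₁_def
      set h₂ : Polynomial (ZMod p) := Eb * u + ((Eb * v) /ₘ g₁) * g₂ with hh₂_def
      have hmod := modByMonic_add_div (Eb * v) g₁
      have hkey : h₁ * g₂ + h₂ * g₁ = Eb := by
        simp only [hh₁_def, hh₂_def]
        linear_combination Eb * huv + g₂ * hmod
      have hd₁ : h₁.degree < g₁.degree := degree_modByMonic_lt _ hg₁
      have hEbdeg : Eb.degree < g₁.degree + g₂.degree := by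
        calc Eb.degree ≤ E.degree := degree_map_le
          _ ≤ (f - F₁ * F₂).degree := hEdeg
          _ < f.degree := hDlt
          _ = g₁.degree + g₂.degree := hfdeg
      have hg₁bot : g₁.degree ≠ ⊥ := by
        rw [Ne, degree_eq_bot]; exact hg₁.ne_zero
      have hg₂bot : g₂.degree ≠ ⊥ := by
        rw [Ne, degree_eq_bot]; exact hg₂.ne_zero
      have hd₂ : h₂.degree < g₂.degree := by
        have h2g1 : h₂ * g₁ = Eb - h₁ * g₂ := by linear_combination hkey
        have hlt : (h₂ * g₁).degree < g₁.degree + g₂.degree := by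
          rw [h2g1]
          refine lt_of_le_of_lt (degree_sub_le _ _) (max_lt hEbdeg ?_)
          rw [degree_mul]
          exact WithBot.add_lt_add_right hg₂bot hd₁
        rw [degree_mul, add_comm g₁.degree g₂.degree] at hlt
        exact (WithBot.add_lt_add_iff_right hg₁bot).mp hlt
      -- lift corrections
      obtain ⟨H₁, hH₁map, hH₁deg⟩ := mem_lifts_and_degree_eq
        ((mem_lifts _).mpr (Polynomial.map_surjective π (zmod_castHom_surjective _) h₁))
      obtain ⟨H₂, hH₂map, hH₂deg⟩ := mem_lifts_and_degree_eq
        ((mem_lifts _).mpr (Polynomial.map_surjective π (zmod_castHom_surjective _) h₂))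
      set pa : ZMod (p ^ (a + 1)) := ((p ^ a : ℕ) : ZMod (p ^ (a + 1))) with hpa_def
      have hCpadeg : ∀ H : Polynomial (ZMod (p ^ (a + 1))),
          (Polynomial.C pa * H).degree ≤ H.degree := fun H => by
        calc (Polynomial.C pa * H).degree ≤ (Polynomial.C pa).degree + H.degree :=
              degree_mul_le _ _
          _ ≤ 0 + H.degree := add_le_add_left degree_C_le _
          _ = H.degree := zero_add _
      have hmon₁ : (F₁ + Polynomial.C pa * H₁).Monic := by
        refine hF₁.add_of_left (lt_of_le_of_lt (hCpadeg H₁) ?_)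
        rw [hH₁deg, hF₁degg]; exact hd₁
      have hmon₂ : (F₂ + Polynomial.C pa * H₂).Monic := by
        refine hF₂.add_of_left (lt_of_le_of_lt (hCpadeg H₂) ?_)
        rw [hH₂deg, hF₂degg]; exact hd₂
      have hπpa : π pa = 0 := by
        rw [hpa_def, map_natCast, ZMod.natCast_eq_zero_iff]
        exact dvd_pow_self p (by omega)
      have hmap₁ : (F₁ + Polynomial.C pa * H₁).map π = g₁ := by
        rw [Polynomial.map_add, Polynomial.map_mul, map_C, hπpa, map_zero, zero_mul,
          add_zero, hF₁π]
      have hmap₂ : (F₂ + Polynomial.C pa * H₂).map π = g₂ := by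
        rw [Polynomial.map_add, Polynomial.map_mul, map_C, hπpa, map_zero, zero_mul,
          add_zero, hF₂π]
      have hkey' : Polynomial.C pa * (E - (H₁ * F₂ + H₂ * F₁)) = 0 := by
        refine poly_pa_mul_eq_zero p a hdvd _ ?_
        rw [Polynomial.map_sub, Polynomial.map_add, Polynomial.map_mul, Polynomial.map_mul,
          hH₁map, hH₂map, hF₁π, hF₂π, ← hEb_def, hkey, sub_self]
      have hpa2 : Polynomial.C pa * Polynomial.C pa = 0 := by
        have hz : ((p ^ a * p ^ a : ℕ) : ZMod (p ^ (a + 1))) = 0 := by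
          rw [ZMod.natCast_eq_zero_iff, ← pow_add]
          exact pow_dvd_pow p (by omega)
        have hm : pa * pa = ((p ^ a * p ^ a : ℕ) : ZMod (p ^ (a + 1))) := by
          rw [hpa_def]; push_cast; ring
        rw [← C_mul, hm, hz, map_zero]
      refine ⟨F₁ + Polynomial.C pa * H₁, F₂ + Polynomial.C pa * H₂, hmon₁, hmon₂, ?_,
        hmap₁, hmap₂⟩
      linear_combination hE + hkey' - (H₁ * H₂) * hpa2

theorem hensel_lift_coprime_factorization (p a : ℕ) (hp : p.Prime) (ha : 1 ≤ a)
    (f : Polynomial (ZMod (p ^ a))) (hf : f.Monic)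
    (g₁ g₂ : Polynomial (ZMod p)) (hg₁ : g₁.Monic) (hg₂ : g₂.Monic)
    (hcop : IsCoprime g₁ g₂)
    (hfac : f.map (ZMod.castHom (dvd_pow_self p (by omega)) (ZMod p)) = g₁ * g₂) :
    ∃ f₁ f₂ : Polynomial (ZMod (p ^ a)), f₁.Monic ∧ f₂.Monic ∧ f = f₁ * f₂ ∧
      f₁.map (ZMod.castHom (dvd_pow_self p (by omega)) (ZMod p)) = g₁ ∧
      f₂.map (ZMod.castHom (dvd_pow_self p (by omega)) (ZMod p)) = g₂ := by
  exact hensel_aux p hp a ha f hf g₁ g₂ hg₁ hg₂ hcop _ hfac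
end

section
/- Zarankiewicz-type bound: let G = (L, R, E) be a bipartite graph with |L| = l, |R| = r ≥ 2. If G contains no K_{s,2} (no two vertices of R have s common neighbors in L), then |E| ≤ l + r·√((s−1)·l). -/
set_option maxRecDepth 4000


theorem zarankiewicz_bound (L R : Type*) [Fintype L] [Fintype R] [DecidableEq L] [DecidableEq R]
    (l r s : ℕ) (hl : Fintype.card L = l) (hr : Fintype.card R = r)
    (hr2 : 2 ≤ r) (hs : s ≤ l)
    (E : Finset (L × R))
    (hfree : ¬ ∃ (L' : Finset L) (R' : Finset R), L'.card = s ∧ R'.card = 2 ∧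
      ∀ u ∈ L', ∀ w ∈ R', (u, w) ∈ E) :
    (E.card : ℝ) ≤ l + r * Real.sqrt (((s - 1 : ℕ) : ℝ) * l) := by
  classical
  set d : L → ℕ := fun u => (Finset.univ.filter fun w => (u, w) ∈ E).card with hd
  -- Step A : |E| = ∑ d u
  have hA : E.card = ∑ u, d u := by
    have hE : E = (Finset.univ ×ˢ Finset.univ).filter (· ∈ E) := by
      ext p; simp
    rw [hE, Finset.card_filter, Finset.sum_product]
    simp only [hd, Finset.card_filter, ← hE]
  set offD := (Finset.univ : Finset R).offDiag with hoffD
  -- common neighborhood bound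
  have hlt : ∀ p ∈ offD, (Finset.univ.filter fun u => (u, p.1) ∈ E ∧ (u, p.2) ∈ E).card < s := by
    intro p hp
    rw [Finset.mem_offDiag] at hp
    by_contra hc
    push_neg at hc
    obtain ⟨L', hL'sub, hL'card⟩ := Finset.exists_subset_card_eq hc
    refine hfree ⟨L', {p.1, p.2}, hL'card, Finset.card_pair hp.2.2, ?_⟩
    intro u hu w hw
    have := hL'sub hu
    rw [Finset.mem_filter] at this
    rcases Finset.mem_insert.mp hw with h | h
    · rw [h]; exact this.2.1
    · rw [Finset.mem_singleton.mp h]; exact this.2.2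
  -- Step B : ∑ d u * (d u - 1) ≤ (s-1) * (r*r)
  have hB : ∑ u, d u * (d u - 1) ≤ (s - 1) * (r * r) := by
    have hfib : ∀ u : L, d u * (d u - 1) =
        ∑ p ∈ offD, if (u, p.1) ∈ E ∧ (u, p.2) ∈ E then 1 else 0 := by
      intro u
      have h1 : (Finset.univ.filter fun w => (u, w) ∈ E).offDiag =
          offD.filter (fun p => (u, p.1) ∈ E ∧ (u, p.2) ∈ E) := by
        ext p
        simp only [Finset.mem_offDiag, Finset.mem_filter, Finset.mem_univ, hoffD, true_and]
        tauto
      rw [← Finset.card_filter, ← h1, Finset.offDiag_card]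
      rw [Nat.mul_sub, mul_one]
    calc ∑ u, d u * (d u - 1)
        = ∑ p ∈ offD, ∑ u : L, (if (u, p.1) ∈ E ∧ (u, p.2) ∈ E then 1 else 0) := by
          rw [← Finset.sum_comm]; exact Finset.sum_congr rfl fun u _ => hfib u
      _ = ∑ p ∈ offD, (Finset.univ.filter fun u => (u, p.1) ∈ E ∧ (u, p.2) ∈ E).card := by
          exact Finset.sum_congr rfl fun p _ => (Finset.card_filter _ _).symm
      _ ≤ ∑ _p ∈ offD, (s - 1) := by
          refine Finset.sum_le_sum fun p hp => ?_
          have := hlt p hp; omega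
      _ = offD.card * (s - 1) := by rw [Finset.sum_const, smul_eq_mul]
      _ ≤ (r * r) * (s - 1) := by
          apply Nat.mul_le_mul_right
          rw [hoffD, Finset.offDiag_card, Finset.card_univ, hr]
          omega
      _ = (s - 1) * (r * r) := by ring
  -- cast to reals
  have hcast : ∀ u : L, ((d u * (d u - 1) : ℕ) : ℝ) = (d u : ℝ) ^ 2 - (d u : ℝ) := by
    intro u
    rcases Nat.eq_zero_or_pos (d u) with h | h
    · simp [h]
    · obtain ⟨k, hk⟩ := Nat.exists_eq_succ_of_ne_zero h.ne'
      rw [hk]; push_cast; ring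
  have hBR : (∑ u, (d u : ℝ) ^ 2) - ∑ u, (d u : ℝ) ≤ ((s - 1 : ℕ) : ℝ) * r * r := by
    have := (Nat.cast_le (α := ℝ)).mpr hB
    push_cast at this
    calc (∑ u, (d u : ℝ) ^ 2) - ∑ u, (d u : ℝ)
        = ∑ u, ((d u * (d u - 1) : ℕ) : ℝ) := by
          rw [← Finset.sum_sub_distrib]
          exact (Finset.sum_congr rfl fun u _ => (hcast u)).symm
      _ ≤ ((s - 1 : ℕ) : ℝ) * r * r := by push_cast; linarith [this]
  -- Cauchy–Schwarz
  have hCS : (∑ u, (d u : ℝ)) ^ 2 ≤ (l : ℝ) * ∑ u, (d u : ℝ) ^ 2 := by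
    have := sq_sum_le_card_mul_sum_sq (s := (Finset.univ : Finset L)) (f := fun u => (d u : ℝ))
    rwa [Finset.card_univ, hl] at this
  set e : ℝ := (E.card : ℝ) with he
  have heq : e = ∑ u, (d u : ℝ) := by rw [he, hA]; push_cast; rfl
  set A : ℝ := ((s - 1 : ℕ) : ℝ) with hA0
  have hA0' : 0 ≤ A := Nat.cast_nonneg _
  have hl0 : (0 : ℝ) ≤ l := Nat.cast_nonneg _
  have hr0 : (0 : ℝ) ≤ r := Nat.cast_nonneg _
  have hkey : e ^ 2 ≤ (l : ℝ) * (A * r * r + e) := by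
    have : ∑ u, (d u : ℝ) ^ 2 ≤ A * r * r + e := by rw [heq]; linarith [hBR]
    calc e ^ 2 ≤ (l : ℝ) * ∑ u, (d u : ℝ) ^ 2 := by rw [heq]; exact hCS
      _ ≤ (l : ℝ) * (A * r * r + e) := by
          apply mul_le_mul_of_nonneg_left this hl0
  have hsq0 : 0 ≤ Real.sqrt (A * l) := Real.sqrt_nonneg _
  by_cases hle : e ≤ (l : ℝ)
  · nlinarith [mul_nonneg hr0 hsq0]
  · push_neg at hle
    have h1 : (e - l) ^ 2 ≤ (r : ℝ) ^ 2 * (A * l) := by nlinarith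
    have h2 : e - l ≤ r * Real.sqrt (A * l) := by
      have h3 : e - l = Real.sqrt ((e - l) ^ 2) := (Real.sqrt_sq (by linarith)).symm
      rw [h3]
      calc Real.sqrt ((e - l) ^ 2) ≤ Real.sqrt ((r : ℝ) ^ 2 * (A * l)) := Real.sqrt_le_sqrt h1
        _ = r * Real.sqrt (A * l) := by
            rw [Real.sqrt_mul (sq_nonneg _), Real.sqrt_sq hr0]
    linarith
end

section
/- Alphabet-free Johnson bound: let C be a code of block length n and minimum distance d over any finite alphabet Σ. For any received word y ∈ Σⁿ, the number of codewords c ∈ C with Hamming distance d(y,c) ≤ n − √(n(n−d)) − 1 is at most n. -/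
theorem johnson_bound (A : Type*) [Fintype A] [DecidableEq A] (n d : ℕ) (hd : d ≤ n)
    (C : Set (Fin n → A))
    (hC : ∀ c₁ ∈ C, ∀ c₂ ∈ C, c₁ ≠ c₂ → d ≤ hammingDist c₁ c₂)
    (y : Fin n → A) :
    {c ∈ C | (hammingDist y c : ℝ) ≤ (n : ℝ) - Real.sqrt ((n : ℝ) * ((n - d : ℕ) : ℝ)) - 1}.ncard
      ≤ n := by
  classical
  by_contra hcon
  push_neg at hcon
  set s : ℝ := Real.sqrt ((n : ℝ) * ((n - d : ℕ) : ℝ)) with hsdef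
  have hs0 : 0 ≤ s := Real.sqrt_nonneg _
  have hs2 : s ^ 2 = (n : ℝ) * ((n : ℝ) - (d : ℝ)) := by
    rw [hsdef, Real.sq_sqrt (by positivity), Nat.cast_sub hd]
  set S := {c ∈ C | (hammingDist y c : ℝ) ≤ (n : ℝ) - s - 1} with hSdef
  have hfin : S.Finite := Set.toFinite S
  set T := hfin.toFinset with hT
  have hMcard : S.ncard = T.card := Set.ncard_eq_toFinset_card S hfin
  rw [hMcard] at hcon
  have hmemT : ∀ c, c ∈ T ↔ c ∈ C ∧ (hammingDist y c : ℝ) ≤ (n : ℝ) - s - 1 := by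
    intro c
    rw [hT, Set.Finite.mem_toFinset]
    rfl
  -- counting lemma
  have count : ∀ x z : Fin n → A,
      ((Finset.univ.filter fun k => x k = z k).card : ℝ) = (n : ℝ) - hammingDist x z := by
    intro x z
    have h1 : (Finset.univ.filter fun k => x k = z k).card
        + (Finset.univ.filter fun k => ¬ x k = z k).card = n := by
      rw [Finset.card_filter_add_card_filter_not, Finset.card_univ, Fintype.card_fin]
    have h2 : hammingDist x z = (Finset.univ.filter fun k => ¬ x k = z k).card := by
      simp [hammingDist, Ne]
    rw [h2]
    push_cast [← h1]
    ring
  set f : Fin n → ℕ := fun k => (T.filter fun c => c k = y k).card with hf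
  have swap : ∑ k, (f k : ℝ) = ∑ c ∈ T, ((n : ℝ) - hammingDist y c) := by
    have : ∑ k, (f k : ℝ) = ∑ k : Fin n, ∑ c ∈ T, (if c k = y k then (1:ℝ) else 0) := by
      simp [hf, Finset.sum_ite_eq, Finset.sum_boole]
    rw [this, Finset.sum_comm]
    refine Finset.sum_congr rfl fun c _ => ?_
    rw [← count y c]
    simp [Finset.sum_boole, eq_comm]
  -- lower bound on A
  set M : ℝ := (T.card : ℝ) with hM
  have hA1 : M * (s + 1) ≤ ∑ k, (f k : ℝ) := by
    rw [swap]
    have : ∀ c ∈ T, s + 1 ≤ (n : ℝ) - hammingDist y c := by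
      intro c hc
      have := ((hmemT c).1 hc).2
      linarith
    calc M * (s + 1) = ∑ _c ∈ T, (s + 1) := by
          rw [Finset.sum_const, nsmul_eq_mul, hM]
    _ ≤ _ := Finset.sum_le_sum this
  -- sum of squares bound
  have hsq : ∑ k, (f k : ℝ) ^ 2 ≤ (∑ k, (f k : ℝ)) + M * (M - 1) * ((n : ℝ) - d) := by
    have hexp : ∀ k : Fin n, (f k : ℝ) ^ 2
        = ∑ q ∈ T ×ˢ T, (if q.1 k = y k ∧ q.2 k = y k then (1:ℝ) else 0) := by
      intro k
      rw [Finset.sum_boole]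
      have : (T ×ˢ T).filter (fun q => q.1 k = y k ∧ q.2 k = y k)
          = (T.filter fun c => c k = y k) ×ˢ (T.filter fun c => c k = y k) := by
        ext q
        simp only [Finset.mem_filter, Finset.mem_product]
        tauto
      rw [this, Finset.card_product]
      push_cast [hf]
      ring
    have hswap2 : ∑ k, (f k : ℝ) ^ 2
        = ∑ q ∈ T ×ˢ T, ((Finset.univ.filter fun k => q.1 k = y k ∧ q.2 k = y k).card : ℝ) := by
      simp_rw [hexp]
      rw [Finset.sum_comm]
      refine Finset.sum_congr rfl fun q _ => ?_
      rw [Finset.sum_boole]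
    rw [hswap2]
    have hsplit : T ×ˢ T = T.diag ∪ T.offDiag := (Finset.diag_union_offDiag T).symm
    rw [hsplit, Finset.sum_union (Finset.disjoint_diag_offDiag T)]
    have hdiag : ∑ q ∈ T.diag, ((Finset.univ.filter fun k => q.1 k = y k ∧ q.2 k = y k).card : ℝ)
        = ∑ k, (f k : ℝ) := by
      rw [Finset.sum_diag, swap]
      refine Finset.sum_congr rfl fun c _ => ?_
      have he : (Finset.univ.filter fun k => c k = y k ∧ c k = y k)
          = (Finset.univ.filter fun k => y k = c k) := by
        ext k; simp [eq_comm]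
      rw [he]
      exact count y c
    have hoff : ∑ q ∈ T.offDiag,
        ((Finset.univ.filter fun k => q.1 k = y k ∧ q.2 k = y k).card : ℝ)
        ≤ M * (M - 1) * ((n : ℝ) - d) := by
      have hbound : ∀ q ∈ T.offDiag,
          ((Finset.univ.filter fun k => q.1 k = y k ∧ q.2 k = y k).card : ℝ)
          ≤ (n : ℝ) - d := by
        rintro ⟨c₁, c₂⟩ hq
        rw [Finset.mem_offDiag] at hq
        obtain ⟨h1, h2, hne⟩ := hq
        have hdle : (d : ℝ) ≤ hammingDist c₁ c₂ := by
          exact_mod_cast hC c₁ ((hmemT c₁).1 h1).1 c₂ ((hmemT c₂).1 h2).1 hne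
        have hsub : ((Finset.univ.filter fun k => c₁ k = y k ∧ c₂ k = y k).card : ℝ)
            ≤ ((Finset.univ.filter fun k => c₁ k = c₂ k).card : ℝ) := by
          have := Finset.card_le_card (s := Finset.univ.filter fun k => c₁ k = y k ∧ c₂ k = y k)
            (t := Finset.univ.filter fun k => c₁ k = c₂ k) ?_
          · exact_mod_cast this
          · intro k hk
            simp only [Finset.mem_filter, Finset.mem_univ, true_and] at hk ⊢
            rw [hk.1, hk.2]
        rw [count c₁ c₂] at hsub
        linarith
      calc _ ≤ ∑ _q ∈ T.offDiag, ((n : ℝ) - d) := Finset.sum_le_sum hbound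
      _ = (T.offDiag.card : ℝ) * ((n : ℝ) - d) := by rw [Finset.sum_const, nsmul_eq_mul]
      _ ≤ M * (M - 1) * ((n : ℝ) - d) := by
          have h1 : T.card ≤ T.card * T.card :=
            Nat.le_mul_of_pos_left _ (by omega)
          have hcard : (T.offDiag.card : ℝ) = M * (M - 1) := by
            rw [Finset.offDiag_card, Nat.cast_sub h1, Nat.cast_mul, hM]; ring
          rw [hcard]
    linarith
  -- Cauchy-Schwarz
  have hCS : (∑ k, (f k : ℝ)) ^ 2 ≤ (n : ℝ) * ∑ k, (f k : ℝ) ^ 2 := by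
    have := sq_sum_le_card_mul_sum_sq (s := (Finset.univ : Finset (Fin n)))
      (f := fun k => (f k : ℝ))
    simpa using this
  have hMn : (n : ℝ) + 1 ≤ M := by
    have h : n + 1 ≤ T.card := hcon
    rw [hM]; exact_mod_cast h
  have hdn : (d : ℝ) ≤ (n : ℝ) := by exact_mod_cast hd
  set Asum := ∑ k, (f k : ℝ) with hAs
  nlinarith [sq_nonneg s, sq_nonneg (Asum - M * (s+1)), mul_pos (by linarith : (0:ℝ) < M) (by linarith : (0:ℝ) < s + 1), hs2, hA1, hsq, hCS, hMn, mul_nonneg hs0 (by linarith : (0:ℝ) ≤ M), sq_nonneg M]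
end

section
/- Agreement-set counting bound for a rank-1 affine family (Lemma for s=1): let C be a linear code over a finite field 𝔽_q (alphabet 𝔽_q^m after folding) of block length N and distance d, and let H ⊆ C be an affine line (affine subspace of dimension 1). For any y and integer b ≥ 1, the number of codewords in H within distance (b/(b+1))·d of y is at most b. -/
theorem affine_line_list_size (F : Type*) [Field F] [Fintype F] [DecidableEq F]
    (N d m b : ℕ) (hb : 1 ≤ b)
    (C : Submodule F (Fin N → (Fin m → F)))
    (hC : ∀ c₁ ∈ C, ∀ c₂ ∈ C, c₁ ≠ c₂ → d ≤ hammingDist c₁ c₂)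
    (c₀ v : Fin N → (Fin m → F)) (hc₀ : c₀ ∈ C) (hv : v ∈ C) (hvne : v ≠ 0)
    (y : Fin N → (Fin m → F)) :
    {h : Fin N → (Fin m → F) | (∃ t : F, h = c₀ + t • v) ∧
      (hammingDist y h : ℝ) < ((b : ℝ) / ((b : ℝ) + 1)) * d}.ncard ≤ b := by
  classical
  set T : Finset F := Finset.univ.filter
    (fun t => (hammingDist y (c₀ + t • v) : ℝ) < ((b : ℝ) / ((b : ℝ) + 1)) * d) with hT
  have hinj : Function.Injective (fun t : F => c₀ + t • v) := by
    intro a b hab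
    simp only [add_right_inj] at hab
    have h0 : (a - b) • v = 0 := by rw [sub_smul, hab, sub_self]
    rcases smul_eq_zero.mp h0 with h | h
    · exact sub_eq_zero.mp h
    · exact absurd h hvne
  have hset : {h : Fin N → (Fin m → F) | (∃ t : F, h = c₀ + t • v) ∧
      (hammingDist y h : ℝ) < ((b : ℝ) / ((b : ℝ) + 1)) * d}
      = (fun t : F => c₀ + t • v) '' ↑T := by
    ext h
    constructor
    · rintro ⟨⟨t, rfl⟩, hd⟩
      exact ⟨t, by simpa [hT] using hd, rfl⟩
    · rintro ⟨t, ht, rfl⟩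
      exact ⟨⟨t, rfl⟩, by simpa [hT] using ht⟩
  rw [hset, Set.ncard_image_of_injective _ hinj, Set.ncard_coe_finset]
  -- support of v
  set S : Finset (Fin N) := Finset.univ.filter (fun j => v j ≠ 0) with hS
  have hdS : d ≤ S.card := by
    have h1 := hC v hv 0 C.zero_mem hvne
    have h2 : hammingDist v (0 : Fin N → Fin m → F) = S.card := by
      unfold hammingDist
      congr 1
    omega
  set A : F → Finset (Fin N) := fun t =>
    Finset.univ.filter (fun j => v j ≠ 0 ∧ y j = c₀ j + t • v j) with hA
  have hAS : ∀ t, A t ⊆ S := by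
    intro t j hj
    simp only [hA, Finset.mem_filter] at hj
    simp [hS, hj.2.1]
  have hdisj : ∀ t₁ ∈ T, ∀ t₂ ∈ T, t₁ ≠ t₂ → Disjoint (A t₁) (A t₂) := by
    intro t₁ _ t₂ _ hne
    rw [Finset.disjoint_left]
    intro j hj1 hj2
    simp only [hA, Finset.mem_filter] at hj1 hj2
    have : t₁ • v j = t₂ • v j := add_left_cancel (hj1.2.2.symm.trans hj2.2.2)
    exact hne (by
      have h0 : (t₁ - t₂) • v j = 0 := by rw [sub_smul, this, sub_self]
      rcases smul_eq_zero.mp h0 with h | h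
      · exact sub_eq_zero.mp h
      · exact absurd h hj1.2.1)
  by_contra hk
  push_neg at hk
  have hTne : T.Nonempty := Finset.card_pos.mp (by omega)
  have hlow : ∀ t ∈ T, (S.card : ℝ) - ((b : ℝ) / ((b : ℝ) + 1)) * d < ((A t).card : ℝ) := by
    intro t ht
    have hd' : (hammingDist y (c₀ + t • v) : ℝ) < ((b : ℝ) / ((b : ℝ) + 1)) * d := by
      simpa [hT] using ht
    set D : Finset (Fin N) := Finset.univ.filter (fun j => y j ≠ (c₀ + t • v) j) with hD
    have hDd : hammingDist y (c₀ + t • v) = D.card := by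
      unfold hammingDist
      congr 1
    have hsub : S ⊆ A t ∪ D := by
      intro j hj
      simp only [hS, Finset.mem_filter, Finset.mem_univ, true_and] at hj
      by_cases hyj : y j = c₀ j + t • v j
      · exact Finset.mem_union_left _ (by simp [hA, hj, hyj])
      · refine Finset.mem_union_right _ ?_
        simp only [hD, Finset.mem_filter, Finset.mem_univ, true_and]
        simpa using hyj
    have hcard : S.card ≤ (A t).card + D.card :=
      (Finset.card_le_card hsub).trans (Finset.card_union_le _ _)
    have hcard' : (S.card : ℝ) ≤ ((A t).card : ℝ) + D.card := by exact_mod_cast hcard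
    rw [hDd] at hd'
    linarith
  have hsum : ∑ t ∈ T, ((A t).card : ℝ) ≤ (S.card : ℝ) := by
    have h1 : ∑ t ∈ T, (A t).card = (T.biUnion A).card := (Finset.card_biUnion hdisj).symm
    have h2 : (T.biUnion A).card ≤ S.card :=
      Finset.card_le_card (Finset.biUnion_subset.mpr fun t _ => hAS t)
    exact_mod_cast h1 ▸ h2
  have hmain : (T.card : ℝ) * ((S.card : ℝ) - ((b : ℝ) / ((b : ℝ) + 1)) * d)
      < ∑ t ∈ T, ((A t).card : ℝ) := by
    have := Finset.sum_lt_sum_of_nonempty hTne hlow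
    simpa [Finset.sum_const, nsmul_eq_mul, mul_sub] using this
  have hk' : (b : ℝ) + 1 ≤ (T.card : ℝ) := by exact_mod_cast hk
  have hds : (d : ℝ) ≤ (S.card : ℝ) := by exact_mod_cast hdS
  have hb' : (1 : ℝ) ≤ (b : ℝ) := by exact_mod_cast hb
  have hd0 : (0 : ℝ) ≤ (d : ℝ) := Nat.cast_nonneg d
  have hbp : (0 : ℝ) < (b : ℝ) + 1 := by linarith
  set k := (T.card : ℝ)
  set s := (S.card : ℝ)
  have hfrac : k * (s * ((b : ℝ) + 1)) - k * ((b : ℝ) * d) < s * ((b : ℝ) + 1) := by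
    have h := hmain.trans_le hsum
    have := mul_lt_mul_of_pos_right h hbp
    calc k * (s * ((b : ℝ) + 1)) - k * ((b : ℝ) * d)
        = k * (s - (b : ℝ) / ((b : ℝ) + 1) * d) * ((b : ℝ) + 1) := by
          field_simp
      _ < s * ((b : ℝ) + 1) := this
  have hk0 : (0 : ℝ) ≤ k := le_of_lt (lt_of_lt_of_le hbp hk')
  nlinarith [mul_nonneg (mul_nonneg hk0 (by linarith : (0 : ℝ) ≤ (b : ℝ))) (sub_nonneg.mpr hds),
    mul_nonneg (by linarith : (0 : ℝ) ≤ k - (b : ℝ) - 1) (le_trans hd0 hds)]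
end

section
/- Reed–Solomon codes over ℤ/p^a from unit evaluation points are MDS: let α₁, …, α_n be elements of ℤ/p^a whose reductions mod p are pairwise distinct. Then the evaluation map f ↦ (f(α₁), …, f(α_n)) from polynomials of degree < k (k ≤ n) is injective, and the resulting code has minimum Hamming distance n − k + 1: any nonzero codeword has at most k − 1 zero coordinates. -/
open Polynomial

lemma rs_prod_dvd {R : Type*} [CommRing R] {ι : Type*} [DecidableEq ι] (α : ι → R)
    (S : Finset ι) (hdist : ∀ i ∈ S, ∀ j ∈ S, i ≠ j → IsUnit (α i - α j))
    (f : Polynomial R) (hroot : ∀ i ∈ S, f.eval (α i) = 0) :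
    (∏ i ∈ S, (X - C (α i))) ∣ f := by
  induction S using Finset.induction generalizing f with
  | empty => simp
  | @insert i S hiS ih =>
    rw [Finset.prod_insert hiS]
    have h1 : (X - C (α i)) ∣ f := by
      rw [dvd_iff_isRoot]
      exact hroot i (Finset.mem_insert_self i S)
    obtain ⟨g, hg⟩ := h1
    have hg' : (∏ j ∈ S, (X - C (α j))) ∣ g := by
      refine ih (fun a ha b hb hab => hdist a (Finset.mem_insert_of_mem ha) b
        (Finset.mem_insert_of_mem hb) hab) g (fun j hj => ?_)
      have hij : i ≠ j := fun h => hiS (h ▸ hj)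
      have hu := hdist j (Finset.mem_insert_of_mem hj) i (Finset.mem_insert_self i S) hij.symm
      have := hroot j (Finset.mem_insert_of_mem hj)
      rw [hg, eval_mul, eval_sub, eval_X, eval_C] at this
      exact (IsUnit.mul_right_eq_zero hu).mp this
    rw [hg]
    exact mul_dvd_mul_left _ hg'

theorem rs_code_mds (p a n k : ℕ) (hp : p.Prime) (ha : 1 ≤ a) (hk : k ≤ n)
    (α : Fin n → ZMod (p ^ a))
    (hdist : ∀ i j, i ≠ j → IsUnit (α i - α j)) :
    (∀ f g : Polynomial (ZMod (p ^ a)), f.degree < (k : ℕ) → g.degree < (k : ℕ) →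
      (∀ i, f.eval (α i) = g.eval (α i)) → f = g) ∧
    (∀ f : Polynomial (ZMod (p ^ a)), f ≠ 0 → f.degree < (k : ℕ) →
      (Finset.univ.filter fun i => f.eval (α i) = 0).card ≤ k - 1) := by
  haveI : Fact (1 < p ^ a) := ⟨Nat.one_lt_pow (by omega) hp.one_lt⟩
  have key : ∀ f : Polynomial (ZMod (p ^ a)), f ≠ 0 →
      ((Finset.univ.filter fun i => f.eval (α i) = 0).card : WithBot ℕ) ≤ f.degree := by
    intro f hf
    set S := Finset.univ.filter fun i => f.eval (α i) = 0 with hS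
    have hdvd : (∏ i ∈ S, (X - C (α i))) ∣ f :=
      rs_prod_dvd α S (fun i _ j _ hij => hdist i j hij) f
        (fun i hi => (Finset.mem_filter.mp hi).2)
    have hmon : (∏ i ∈ S, (X - C (α i))).Monic :=
      monic_prod_of_monic _ _ (fun i _ => monic_X_sub_C _)
    have hdeg : (∏ i ∈ S, (X - C (α i))).degree = (S.card : WithBot ℕ) := by
      rw [degree_eq_natDegree hmon.ne_zero,
        natDegree_prod_of_monic _ _ (fun i _ => monic_X_sub_C _)]
      simp
    obtain ⟨g, hg⟩ := hdvd
    have hg0 : g ≠ 0 := by rintro rfl; exact hf (by simpa using hg)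
    have : f.degree = g.degree + (S.card : WithBot ℕ) := by
      rw [hg, mul_comm, hmon.degree_mul, hdeg]
    rw [this]
    exact le_add_of_nonneg_left (zero_le_degree_iff.mpr hg0)
  constructor
  · intro f g hfd hgd heq
    by_contra hne
    have hfg : f - g ≠ 0 := sub_ne_zero.mpr hne
    have h1 := key (f - g) hfg
    have h2 : (Finset.univ.filter fun i => (f - g).eval (α i) = 0) = Finset.univ := by
      ext i; simp [sub_eq_zero, heq i]
    rw [h2, Finset.card_univ, Fintype.card_fin] at h1
    have h3 : (f - g).degree < (k : ℕ) := lt_of_le_of_lt (degree_sub_le _ _) (max_lt hfd hgd)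
    have : (n : WithBot ℕ) < (k : ℕ) := lt_of_le_of_lt h1 h3
    have := Nat.cast_lt.mp this
    omega
  · intro f hf hfd
    have h1 := lt_of_le_of_lt (key f hf) hfd
    have h2 : (Finset.univ.filter fun i => f.eval (α i) = 0).card < k := Nat.cast_lt.mp h1
    omega
end
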